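/- Call a formula of L TF-normal if every update model occurring in it (including, recursively, update models occurring inside the preconditions and postconditions of events) has all its postconditions on their domains equal to ⊤ or ⊥. For every formula φ ∈ L there exists a TF-normal formula ψ ∈ L such that for every epistemic state (M,s): (M,s) ⊨ φ iff (M,s) ⊨ ψ. That is, the logic of change with postconditions true and false only is equally expressive as the logic of change with arbitrary postconditions. -/

import Mathlib

/-- Formulas of the language `L` of epistemic logic with updates (events of
epistemic and/or ontic change).  The constructor `upd` inlines an update
`(U,e)`: an event type `E`, accessibility relations on events, preconditions,
postconditions, and the actual event `e`.  `⊤` and `⊥` are included as the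
usual primitives. -/
inductive Form (A P : Type) : Type 1 where
  | atom : P → Form A P
  | top : Form A P
  | bot : Form A P
  | neg : Form A P → Form A P
  | and : Form A P → Form A P → Form A P
  | box : A → Form A P → Form A P
  | cbox : Set A → Form A P → Form A P
  | upd : (E : Type) → (A → E → E → Prop) → (E → Form A P) → (E → P → Form A P) →
      E → Form A P → Form A P

/-- An update model `U = (E, rel, pre, post)`. -/
structure Upd (A P : Type) : Type 1 where
  E : Type
  rel : A → E → E → Prop
  pre : E → Form A P
  post : E → P → Form A P

/-- An epistemic model `M = (S, R, V)`. -/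
structure Model (A P : Type) : Type 1 where
  S : Type
  R : A → S → S → Prop
  V : P → S → Prop

/-- The formula `[U,e]φ`. -/
def Form.updF {A P : Type} (U : Upd A P) (e : U.E) (φ : Form A P) : Form A P :=
  Form.upd U.E U.rel U.pre U.post e φ

/-- The product construction, parameterised by the satisfaction relations of the
preconditions and postconditions of the events. -/
def prodM {A P : Type} (M : Model A P) (E : Type) (rel : A → E → E → Prop)
    (preS : E → M.S → Prop) (postS : E → M.S → P → Prop) : Model A P where
  S := { x : M.S × E // preS x.2 x.1 }
  R a x y := M.R a x.1.1 y.1.1 ∧ rel a x.1.2 y.1.2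
  V p x := postS x.1.2 x.1.1 p

/-- Satisfaction: `sat φ M s` is `(M,s) ⊨ φ`. -/
def sat {A P : Type} : Form A P → (M : Model A P) → M.S → Prop
  | .atom p, M, s => M.V p s
  | .top, _, _ => True
  | .bot, _, _ => False
  | .neg φ, M, s => ¬ sat φ M s
  | .and φ ψ, M, s => sat φ M s ∧ sat ψ M s
  | .box a φ, M, s => ∀ t, M.R a s t → sat φ M t
  | .cbox B φ, M, s =>
      ∀ t, Relation.ReflTransGen (fun x y => ∃ a ∈ B, M.R a x y) s t → sat φ M t
  | .upd E rel pre post e φ, M, s =>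
      ∀ h : sat (pre e) M s,
        sat φ (prodM M E rel (fun f t => sat (pre f) M t) (fun f t p => sat (post f p) M t))
          ⟨(s, e), h⟩

/-- The product update `M ⊗ U`; its domain is `{(t,f) | (M,t) ⊨ pre(f)}`. -/
def Model.prodUpd {A P : Type} (M : Model A P) (U : Upd A P) : Model A P :=
  prodM M U.E U.rel (fun f t => sat (U.pre f) M t) (fun f t p => sat (U.post f p) M t)

/-- Well-formedness of a formula: all event sets of update models occurring in it are
finite and nonempty, and all postconditions differ from the identity `p ↦ p` on only
finitely many atoms (this finite set being the domain `dom(post(e))`). -/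
def Form.WF {A P : Type} : Form A P → Prop
  | .atom _ => True
  | .top => True
  | .bot => True
  | .neg φ => φ.WF
  | .and φ ψ => φ.WF ∧ ψ.WF
  | .box _ φ => φ.WF
  | .cbox _ φ => φ.WF
  | .upd E _ pre post _ φ =>
      Nonempty E ∧ Finite E ∧ (∀ f, (pre f).WF) ∧ (∀ f p, (post f p).WF) ∧
      (∀ f, {p | post f p ≠ Form.atom p}.Finite) ∧ φ.WF

/-- Well-formedness of an update model: the event set is finite and nonempty, the
preconditions and postconditions are well-formed formulas, and each postcondition
differs from the identity on only finitely many atoms, the set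
`{p | post e p ≠ atom p}` being the domain `dom(post(e))`. -/
def Upd.WF {A P : Type} (U : Upd A P) : Prop :=
  Nonempty U.E ∧ Finite U.E ∧ (∀ f, (U.pre f).WF) ∧ (∀ f p, (U.post f p).WF) ∧
  (∀ f, {p | U.post f p ≠ Form.atom p}.Finite)

/-- A formula is TF-normal if every update model occurring in it (including,
recursively, update models occurring inside the preconditions and postconditions
of events) has all its postconditions on their domains equal to `⊤` or `⊥`. -/
def TFNormal {A P : Type} : Form A P → Prop
  | .atom _ => True
  | .top => True
  | .bot => True
  | .neg φ => TFNormal φ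
  | .and φ ψ => TFNormal φ ∧ TFNormal ψ
  | .box _ φ => TFNormal φ
  | .cbox _ φ => TFNormal φ
  | .upd _ _ pre post _ φ =>
      (∀ f, TFNormal (pre f)) ∧ (∀ f p, TFNormal (post f p)) ∧
      (∀ f p, post f p = Form.atom p ∨ post f p = Form.top ∨ post f p = Form.bot) ∧
      TFNormal φ


/-!
Given an update `(U, e)` whose postcondition domains are `D f`, guess for every event `f` a
truth value `v q` of `post f q` for each `q ∈ D f`. The update `U'` whose events are pairs
`(f, v)`, with precondition `pre f ∧ ⋀_{q ∈ D f} (post f q ↔ v q)` and postcondition `v q`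
(as `⊤` or `⊥`) on `D f`, has a product `M ⊗ U'` isomorphic to `M ⊗ U`: the precondition
forces `v` to be the actual truth values at the state. Hence `[U, e]φ` is equivalent to
`⋀_v [U', (e, v)]φ`, and induction on formulas, using that satisfaction is invariant under
isomorphisms of models, normalizes every update.
-/

section

variable {A P : Type}

namespace Form

def SemEquiv (φ ψ : Form A P) : Prop :=
  ∀ (M : Model A P) (s : M.S), sat φ M s ↔ sat ψ M s

theorem SemEquiv.symm {φ ψ : Form A P} (h : φ.SemEquiv ψ) : ψ.SemEquiv φ :=
  fun M s => (h M s).symm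

theorem SemEquiv.trans {φ ψ χ : Form A P} (h₁ : φ.SemEquiv ψ) (h₂ : ψ.SemEquiv χ) :
    φ.SemEquiv χ :=
  fun M s => (h₁ M s).trans (h₂ M s)

def conj : List (Form A P) → Form A P
  | [] => .top
  | χ :: l => .and χ (conj l)

noncomputable def iConj {ι : Type*} [Finite ι] (g : ι → Form A P) : Form A P :=
  conj ((@Finset.univ ι (Fintype.ofFinite ι)).toList.map g)

def lit (b : Bool) (χ : Form A P) : Form A P :=
  bif b then χ else .neg χ

def ofBool (b : Bool) : Form A P :=
  bif b then .top else .bot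

theorem wf_conj {l : List (Form A P)} (h : ∀ χ ∈ l, χ.WF) : (conj l).WF := by
  induction l with
  | nil => trivial
  | cons χ l ih => exact ⟨h χ (by simp), ih fun χ' hχ' => h χ' (by simp [hχ'])⟩

theorem tfNormal_conj {l : List (Form A P)} (h : ∀ χ ∈ l, TFNormal χ) :
    TFNormal (conj l) := by
  induction l with
  | nil => trivial
  | cons χ l ih => exact ⟨h χ (by simp), ih fun χ' hχ' => h χ' (by simp [hχ'])⟩

theorem wf_iConj {ι : Type*} [Finite ι] {g : ι → Form A P} (h : ∀ i, (g i).WF) :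
    (iConj g).WF :=
  wf_conj (by simpa using h)

theorem tfNormal_iConj {ι : Type*} [Finite ι] {g : ι → Form A P} (h : ∀ i, TFNormal (g i)) :
    TFNormal (iConj g) :=
  tfNormal_conj (by simpa using h)

end Form

theorem sat_conj (l : List (Form A P)) (M : Model A P) (s : M.S) :
    sat (Form.conj l) M s ↔ ∀ χ ∈ l, sat χ M s := by
  induction l with
  | nil => simp [Form.conj, sat]
  | cons χ l ih => simp [Form.conj, sat, ih]

theorem sat_iConj {ι : Type*} [Finite ι] (g : ι → Form A P) (M : Model A P) (s : M.S) :
    sat (Form.iConj g) M s ↔ ∀ i, sat (g i) M s := by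
  simp [Form.iConj, sat_conj]

theorem sat_lit (b : Bool) (χ : Form A P) (M : Model A P) (s : M.S) :
    sat (Form.lit b χ) M s ↔ (sat χ M s ↔ b = true) := by
  cases b <;> simp [Form.lit, sat]

theorem sat_ofBool (b : Bool) (M : Model A P) (s : M.S) :
    sat (Form.ofBool b : Form A P) M s ↔ b = true := by
  cases b <;> simp [Form.ofBool, sat]

namespace Model

structure Iso (M N : Model A P) where
  toEquiv : M.S ≃ N.S
  rel_iff : ∀ a s t, M.R a s t ↔ N.R a (toEquiv s) (toEquiv t)
  val_iff : ∀ p s, M.V p s ↔ N.V p (toEquiv s)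

def Iso.refl (M : Model A P) : M.Iso M :=
  ⟨Equiv.refl M.S, fun _ _ _ => .rfl, fun _ _ => .rfl⟩

def Iso.prodM {M N : Model A P} (σ : M.Iso N) {E : Type} (rel : A → E → E → Prop)
    {preM : E → M.S → Prop} {preN : E → N.S → Prop}
    {postM : E → M.S → P → Prop} {postN : E → N.S → P → Prop}
    (hpre : ∀ f s, preM f s ↔ preN f (σ.toEquiv s))
    (hpost : ∀ f s p, postM f s p ↔ postN f (σ.toEquiv s) p) :
    (_root_.prodM M E rel preM postM).Iso (_root_.prodM N E rel preN postN) where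
  toEquiv := (σ.toEquiv.prodCongr (Equiv.refl E)).subtypeEquiv fun x => hpre x.2 x.1
  rel_iff a _ _ := and_congr_left' (σ.rel_iff a _ _)
  val_iff p x := hpost x.1.2 x.1.1 p

theorem Iso.reflTransGen_iff {M N : Model A P} (σ : M.Iso N) (B : Set A) (s t : M.S) :
    Relation.ReflTransGen (fun x y => ∃ a ∈ B, N.R a x y) (σ.toEquiv s) (σ.toEquiv t) ↔
      Relation.ReflTransGen (fun x y => ∃ a ∈ B, M.R a x y) s t := by
  constructor
  · intro h
    simpa [Function.onFun] using Relation.ReflTransGen.lift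
      (p := fun x y => ∃ a ∈ B, M.R a x y) σ.toEquiv.symm
      (fun _ _ ⟨a, ha, hxy⟩ => ⟨a, ha, (σ.rel_iff a _ _).mpr (by simpa using hxy)⟩) _ _ h
  · exact Relation.ReflTransGen.lift (p := fun x y => ∃ a ∈ B, N.R a x y) σ.toEquiv
      (fun _ _ ⟨a, ha, hxy⟩ => ⟨a, ha, (σ.rel_iff a _ _).mp hxy⟩) _ _

end Model

theorem sat_iff_of_iso (φ : Form A P) :
    ∀ {M N : Model A P} (σ : M.Iso N) (s : M.S), sat φ M s ↔ sat φ N (σ.toEquiv s) := by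
  induction φ with
  | atom p => exact fun σ s => σ.val_iff p s
  | top => exact fun _ _ => .rfl
  | bot => exact fun _ _ => .rfl
  | neg φ ih => exact fun σ s => not_congr (ih σ s)
  | and φ ψ ihφ ihψ => exact fun σ s => and_congr (ihφ σ s) (ihψ σ s)
  | box a φ ih =>
      exact fun σ s => σ.toEquiv.forall_congr fun t => imp_congr (σ.rel_iff a s t) (ih σ t)
  | cbox B φ ih =>
      exact fun σ s => σ.toEquiv.forall_congr fun t =>
        imp_congr (σ.reflTransGen_iff B s t).symm (ih σ t)
  | upd E rel pre post e φ ihpre ihpost ihφ =>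
      intro M N σ s
      let τ : (M.prodUpd ⟨E, rel, pre, post⟩).Iso (N.prodUpd ⟨E, rel, pre, post⟩) :=
        σ.prodM rel (fun f => ihpre f σ) (fun f s p => ihpost f p σ s)
      exact ⟨fun H h => (ihφ τ _).mp (H ((ihpre e σ s).mpr h)),
        fun H h => (ihφ τ _).mpr (H ((ihpre e σ s).mp h))⟩

theorem sat_updF (U : Upd A P) (e : U.E) (φ : Form A P) (M : Model A P) (s : M.S) :
    sat (Form.updF U e φ) M s ↔
      ∀ h : sat (U.pre e) M s, sat φ (M.prodUpd U) ⟨(s, e), h⟩ :=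
  .rfl

theorem Form.wf_updF {U : Upd A P} {e : U.E} {φ : Form A P} :
    (Form.updF U e φ).WF ↔ U.WF ∧ φ.WF := by
  simp only [Form.updF, Form.WF, Upd.WF, and_assoc]

theorem Form.SemEquiv.upd {E : Type} {rel : A → E → E → Prop} {pre pre' : E → Form A P}
    {post post' : E → P → Form A P} {φ φ' : Form A P}
    (hpre : ∀ f, (pre f).SemEquiv (pre' f)) (hpost : ∀ f p, (post f p).SemEquiv (post' f p))
    (hφ : φ.SemEquiv φ') (e : E) :
    (Form.upd E rel pre post e φ).SemEquiv (Form.upd E rel pre' post' e φ') := by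
  intro M s
  let τ : (M.prodUpd ⟨E, rel, pre, post⟩).Iso (M.prodUpd ⟨E, rel, pre', post'⟩) :=
    (Model.Iso.refl M).prodM rel (fun f => hpre f M) (fun f t p => hpost f p M t)
  exact ⟨fun H h => (hφ _ _).mp ((sat_iff_of_iso φ τ _).mp (H ((hpre e M s).mpr h))),
    fun H h => (sat_iff_of_iso φ τ _).mpr ((hφ _ _).mpr (H ((hpre e M s).mp h)))⟩

namespace Upd

variable (U : Upd A P) (D : U.E → Finset P)

open Classical in
noncomputable def tfSplit : Upd A P where
  E := (f : U.E) × ({p // p ∈ D f} → Bool)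
  rel a x y := U.rel a x.1 y.1
  pre x := .and (U.pre x.1) (Form.iConj fun q => Form.lit (x.2 q) (U.post x.1 q))
  post x p := if h : p ∈ D x.1 then Form.ofBool (x.2 ⟨p, h⟩) else .atom p

open Classical in
noncomputable def domVal (M : Model A P) (f : U.E) (t : M.S) : {p // p ∈ D f} → Bool :=
  fun q => decide (sat (U.post f q) M t)

variable {U D}

theorem sat_tfSplit_pre {M : Model A P} {f : U.E} {v : {p // p ∈ D f} → Bool} {t : M.S} :
    sat ((U.tfSplit D).pre ⟨f, v⟩) M t ↔ sat (U.pre f) M t ∧ v = U.domVal D M f t := by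
  simp only [tfSplit, sat, sat_iConj, sat_lit]
  refine and_congr_right' (funext_iff.trans (forall_congr' fun q => ?_)).symm
  cases v q <;> simp [domVal]

theorem sat_tfSplit_post_domVal
    (hD : ∀ f p, p ∉ D f → (U.post f p).SemEquiv (.atom p)) (M : Model A P) (f : U.E)
    (t : M.S) (p : P) :
    sat ((U.tfSplit D).post ⟨f, U.domVal D M f t⟩ p) M t ↔ sat (U.post f p) M t := by
  by_cases hp : p ∈ D f
  · simp [tfSplit, hp, sat_ofBool, domVal]
  · simpa [tfSplit, hp, sat] using (hD f p hp M t).symm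

noncomputable def prodUpdTFSplitIso (hD : ∀ f p, p ∉ D f → (U.post f p).SemEquiv (.atom p))
    (M : Model A P) : (M.prodUpd U).Iso (M.prodUpd (U.tfSplit D)) where
  toEquiv :=
    { toFun x :=
        ⟨(x.1.1, ⟨x.1.2, U.domVal D M x.1.2 x.1.1⟩), sat_tfSplit_pre.mpr ⟨x.2, rfl⟩⟩
      invFun y := ⟨(y.1.1, y.1.2.1), (sat_tfSplit_pre.mp y.2).1⟩
      left_inv _ := rfl
      right_inv := by
        rintro ⟨⟨t, f, v⟩, h⟩
        have hv : v = U.domVal D M f t := (sat_tfSplit_pre.mp h).2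
        subst hv
        rfl }
  rel_iff _ _ _ := .rfl
  val_iff p x := (sat_tfSplit_post_domVal hD M x.1.2 x.1.1 p).symm

theorem tfSplit_post_eq (x : (U.tfSplit D).E) (p : P) :
    (U.tfSplit D).post x p = .atom p ∨ (U.tfSplit D).post x p = .top ∨
      (U.tfSplit D).post x p = .bot := by
  dsimp only [tfSplit]
  split_ifs with hp
  · cases x.2 ⟨p, hp⟩ <;> simp [Form.ofBool]
  · exact Or.inl rfl

theorem wf_tfSplit [Nonempty U.E] [Finite U.E] (hpre : ∀ f, (U.pre f).WF)
    (hpost : ∀ f p, (U.post f p).WF) : (U.tfSplit D).WF := by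
  obtain ⟨f⟩ := ‹Nonempty U.E›
  refine ⟨⟨⟨f, fun _ => true⟩⟩, inferInstanceAs (Finite (Σ f, _)),
    fun x => ⟨hpre x.1, Form.wf_iConj fun q => ?_⟩, fun x p => ?_,
    fun x => (D x.1).finite_toSet.subset fun p hp => ?_⟩
  · cases x.2 q <;> exact hpost x.1 q
  · rcases tfSplit_post_eq x p with h | h | h <;> rw [h] <;> trivial
  · by_contra h
    exact hp (dif_neg h)

end Upd

noncomputable def Form.updTFSplit (U : Upd A P) (D : U.E → Finset P) (e : U.E)
    (φ : Form A P) : Form A P :=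
  Form.iConj fun v : {p // p ∈ D e} → Bool => Form.updF (U.tfSplit D) ⟨e, v⟩ φ

theorem Form.semEquiv_updTFSplit {U : Upd A P} {D : U.E → Finset P}
    (hD : ∀ f p, p ∉ D f → (U.post f p).SemEquiv (.atom p)) (e : U.E) (φ : Form A P) :
    (Form.updF U e φ).SemEquiv (Form.updTFSplit U D e φ) := by
  intro M s
  let σ := Upd.prodUpdTFSplitIso hD M
  rw [updTFSplit, sat_iConj, sat_updF]
  constructor
  · intro H v h
    obtain ⟨hpre, rfl⟩ := Upd.sat_tfSplit_pre.mp h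
    exact (sat_iff_of_iso φ σ _).mp (H hpre)
  · intro H hpre
    exact (sat_iff_of_iso φ σ _).mpr (H _ _)

theorem Form.wf_updTFSplit {U : Upd A P} [Nonempty U.E] [Finite U.E] {D : U.E → Finset P}
    (hpre : ∀ f, (U.pre f).WF) (hpost : ∀ f p, (U.post f p).WF) (e : U.E) {φ : Form A P}
    (hφ : φ.WF) : (Form.updTFSplit U D e φ).WF :=
  Form.wf_iConj fun _ => Form.wf_updF.mpr ⟨Upd.wf_tfSplit hpre hpost, hφ⟩

theorem Form.tfNormal_updTFSplit {U : Upd A P} {D : U.E → Finset P}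
    (hpre : ∀ f, TFNormal (U.pre f)) (hpost : ∀ f p, TFNormal (U.post f p)) (e : U.E)
    {φ : Form A P} (hφ : TFNormal φ) : TFNormal (Form.updTFSplit U D e φ) := by
  refine Form.tfNormal_iConj fun _ => ⟨fun x => ⟨hpre x.1, Form.tfNormal_iConj fun q => ?_⟩,
    fun x p => ?_, Upd.tfSplit_post_eq, hφ⟩
  · cases x.2 q <;> exact hpost x.1 q
  · rcases Upd.tfSplit_post_eq x p with h | h | h <;> rw [h] <;> trivial

theorem Form.WF.exists_tfNormal_semEquiv {φ : Form A P} (hφ : φ.WF) :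
    ∃ ψ : Form A P, ψ.WF ∧ TFNormal ψ ∧ φ.SemEquiv ψ := by
  induction φ with
  | atom p => exact ⟨.atom p, trivial, trivial, fun _ _ => .rfl⟩
  | top => exact ⟨.top, trivial, trivial, fun _ _ => .rfl⟩
  | bot => exact ⟨.bot, trivial, trivial, fun _ _ => .rfl⟩
  | neg φ ih =>
    obtain ⟨ψ, hwf, htf, hψ⟩ := ih hφ
    exact ⟨.neg ψ, hwf, htf, fun M s => not_congr (hψ M s)⟩
  | and φ χ ihφ ihχ =>
    obtain ⟨ψ, hwf, htf, hψ⟩ := ihφ hφ.1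
    obtain ⟨ψ', hwf', htf', hψ'⟩ := ihχ hφ.2
    exact ⟨.and ψ ψ', ⟨hwf, hwf'⟩, ⟨htf, htf'⟩,
      fun M s => and_congr (hψ M s) (hψ' M s)⟩
  | box a φ ih =>
    obtain ⟨ψ, hwf, htf, hψ⟩ := ih hφ
    exact ⟨.box a ψ, hwf, htf,
      fun M s => forall_congr' fun t => imp_congr_right fun _ => hψ M t⟩
  | cbox B φ ih =>
    obtain ⟨ψ, hwf, htf, hψ⟩ := ih hφ
    exact ⟨.cbox B ψ, hwf, htf,
      fun M s => forall_congr' fun t => imp_congr_right fun _ => hψ M t⟩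
  | upd E rel pre post e φ ihpre ihpost ihφ =>
    obtain ⟨hne, hfin, hpreWF, hpostWF, hdom, hφWF⟩ := hφ
    choose pre' hpre'WF hpre'TF hpre' using fun f => ihpre f (hpreWF f)
    choose post' hpost'WF hpost'TF hpost' using fun f p => ihpost f p (hpostWF f p)
    obtain ⟨φ', hφ'WF, hφ'TF, hφ'⟩ := ihφ hφWF
    let U' : Upd A P := ⟨E, rel, pre', post'⟩
    let D : E → Finset P := fun f => (hdom f).toFinset
    have hD : ∀ f p, p ∉ D f → (post' f p).SemEquiv (.atom p) := by
      intro f p hp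
      have hpost : post f p = .atom p := by simpa [D] using hp
      exact hpost ▸ (hpost' f p).symm
    exact ⟨Form.updTFSplit U' D e φ',
      Form.wf_updTFSplit (U := U') hpre'WF hpost'WF e hφ'WF,
      Form.tfNormal_updTFSplit (U := U') hpre'TF hpost'TF e hφ'TF,
      (Form.SemEquiv.upd hpre' hpost' hφ' e).trans
        (Form.semEquiv_updTFSplit (U := U') hD e φ')⟩

end

theorem tf_normal_equally_expressive_general {A P : Type}
    (φ : Form A P) (hφ : φ.WF) :
    ∃ ψ : Form A P, ψ.WF ∧ TFNormal ψ ∧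
      ∀ M : Model A P, Nonempty M.S → ∀ s : M.S, (sat φ M s ↔ sat ψ M s) := by
  obtain ⟨ψ, hwf, htf, hψ⟩ := hφ.exists_tfNormal_semEquiv
  exact ⟨ψ, hwf, htf, fun M _ s => hψ M s⟩

/-- for every formula `φ ∈ L` there exists a TF-normal formula `ψ ∈ L`
such that for every epistemic state `(M,s)`: `(M,s) ⊨ φ` iff `(M,s) ⊨ ψ`.  That is,
the logic of change with postconditions true and false only is equally expressive
as the logic of change with arbitrary postconditions. -/
theorem tf_normal_equally_expressive {A P : Type} [Finite A] [Countable P]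
    (φ : Form A P) (hφ : φ.WF) :
    ∃ ψ : Form A P, ψ.WF ∧ TFNormal ψ ∧
      ∀ M : Model A P, Nonempty M.S → ∀ s : M.S, (sat φ M s ↔ sat ψ M s) :=
  tf_normal_equally_expressive_general φ hφ
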